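/- arXiv:1911.00026 — 2 statements merged into one kernel-verified Lean document; each statement's English description precedes it below -/
import Mathlib

section
/- Let A ∈ ℝ^{m×n} have full column rank n, b ∈ ℝ^m, c ∈ ℝⁿ, x = (AᵀA)⁻¹(Aᵀb + c), r = b − Ax, A† = (AᵀA)⁻¹Aᵀ. Define M̄ = (1 + ‖r‖²)(AᵀA)⁻² + (1 + ‖x‖²)(AᵀA)⁻¹ − 2 sym(B), where B = A† r xᵀ (AᵀA)⁻¹ and sym(B) = (B + Bᵀ)/2. Then for every y ∈ ℝⁿ, setting u = (AᵀA)⁻¹y and z = A(AᵀA)⁻¹y, one has the identity ‖r uᵀ − z xᵀ‖_F² + ‖z‖² + ‖u‖² = yᵀ M̄ y. -/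
open Matrix

/-- Euclidean norm of a vector. -/
noncomputable def euclNorm {k : Type*} [Fintype k] (v : k → ℝ) : ℝ :=
  Real.sqrt (∑ i, v i ^ 2)

/-- Frobenius norm of a matrix. -/
noncomputable def frobNorm {k l : Type*} [Fintype k] [Fintype l]
    (M : Matrix k l ℝ) : ℝ :=
  Real.sqrt (∑ i, ∑ j, M i j ^ 2)

lemma euclNorm_sq {k : Type*} [Fintype k] (v : k → ℝ) :
    euclNorm v ^ 2 = v ⬝ᵥ v := by
  rw [euclNorm, Real.sq_sqrt (Finset.sum_nonneg fun i _ => sq_nonneg _)]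
  simp [dotProduct, sq]

lemma frob_expand {k l : Type*} [Fintype k] [Fintype l] (r z : (k → ℝ)) (v w : l → ℝ) :
    frobNorm (vecMulVec r v - vecMulVec z w) ^ 2
      = (r ⬝ᵥ r) * (v ⬝ᵥ v) - 2 * ((r ⬝ᵥ z) * (v ⬝ᵥ w)) + (z ⬝ᵥ z) * (w ⬝ᵥ w) := by
  rw [frobNorm]
  simp only [Matrix.sub_apply, vecMulVec_apply]
  rw [Real.sq_sqrt (Finset.sum_nonneg fun i _ =>
    Finset.sum_nonneg fun j _ => sq_nonneg _)]
  simp only [Matrix.sub_apply, vecMulVec_apply, dotProduct]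
  have h : ∀ (i : k) (j : l), (r i * v j - z i * w j) ^ 2
      = r i * r i * (v j * v j) - 2 * (r i * z i * (v j * w j)) + z i * z i * (w j * w j) := by
    intros; ring
  simp_rw [h]
  have h2 : ∀ i : k, ∑ j : l,
      (r i * r i * (v j * v j) - 2 * (r i * z i * (v j * w j)) + z i * z i * (w j * w j))
      = (r i * r i) * (∑ j, v j * v j) - 2 * ((r i * z i) * (∑ j, v j * w j))
        + (z i * z i) * (∑ j, w j * w j) := by
    intro i
    rw [Finset.sum_add_distrib, Finset.sum_sub_distrib, ← Finset.mul_sum, ← Finset.mul_sum,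
      ← Finset.mul_sum, ← Finset.mul_sum]
  simp_rw [h2]
  rw [Finset.sum_add_distrib, Finset.sum_sub_distrib, ← Finset.sum_mul, ← Finset.sum_mul,
    ← Finset.mul_sum, ← Finset.sum_mul]

lemma vecMulVec_mulVec' {k l : Type*} [Fintype k] [Fintype l] (r : k → ℝ) (x u : l → ℝ) :
    (vecMulVec r x) *ᵥ u = (x ⬝ᵥ u) • r := by
  ext i
  simp only [mulVec, vecMulVec_apply, dotProduct, Pi.smul_apply, smul_eq_mul,
    Finset.sum_mul]
  exact Finset.sum_congr rfl fun j _ => by ring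

/-- With `M̄ = (1 + ‖r‖²)(AᵀA)⁻² + (1 + ‖x‖²)(AᵀA)⁻¹ − 2 sym(B)`,
`B = A† r xᵀ (AᵀA)⁻¹`, one has, for every `y`, with `u = (AᵀA)⁻¹y` and `z = A(AᵀA)⁻¹y`,
the identity `‖r uᵀ − z xᵀ‖_F² + ‖z‖² + ‖u‖² = yᵀ M̄ y`. -/
theorem stmt5 {m n : ℕ} (hn : 0 < n) (hmn : n ≤ m)
    (A : Matrix (Fin m) (Fin n) ℝ) (hA : A.rank = n)
    (b : Fin m → ℝ) (c : Fin n → ℝ)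
    (x : Fin n → ℝ) (hx : x = (Aᵀ * A)⁻¹ *ᵥ (Aᵀ *ᵥ b + c))
    (r : Fin m → ℝ) (hr : r = b - A *ᵥ x)
    (B : Matrix (Fin n) (Fin n) ℝ)
    (hB : B = ((Aᵀ * A)⁻¹ * Aᵀ) * vecMulVec r x * (Aᵀ * A)⁻¹)
    (Mbar : Matrix (Fin n) (Fin n) ℝ)
    (hM : Mbar = (1 + euclNorm r ^ 2) • ((Aᵀ * A)⁻¹ * (Aᵀ * A)⁻¹)
        + (1 + euclNorm x ^ 2) • (Aᵀ * A)⁻¹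
        - (2 : ℝ) • ((1 / 2 : ℝ) • (B + Bᵀ)))
    (y : Fin n → ℝ)
    (u : Fin n → ℝ) (hu : u = (Aᵀ * A)⁻¹ *ᵥ y)
    (z : Fin m → ℝ) (hz : z = A *ᵥ ((Aᵀ * A)⁻¹ *ᵥ y)) :
    frobNorm (vecMulVec r u - vecMulVec z x) ^ 2 + euclNorm z ^ 2 + euclNorm u ^ 2 =
      y ⬝ᵥ (Mbar *ᵥ y) := by
  set G := Aᵀ * A with hGdef
  -- invertibility of G
  have hrank : G.rank = n := by rw [hGdef, Matrix.rank_transpose_mul_self, hA]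
  have hdet : IsUnit G.det := by
    rw [← Matrix.isUnit_iff_isUnit_det, ← Matrix.mulVec_surjective_iff_isUnit]
    have htop : LinearMap.range G.mulVecLin = ⊤ := by
      apply Submodule.eq_top_of_finrank_eq
      rw [← Matrix.rank, hrank, Module.finrank_pi]
      simp
    intro w
    have hw : w ∈ LinearMap.range G.mulVecLin := htop.symm ▸ Submodule.mem_top
    obtain ⟨v, hv⟩ := hw
    exact ⟨v, by simpa using hv⟩
  have hGiG : G⁻¹ * G = 1 := Matrix.nonsing_inv_mul G hdet
  have hGGi : G * G⁻¹ = 1 := Matrix.mul_nonsing_inv G hdet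
  have hGsymm : G⁻¹ᵀ = G⁻¹ := by
    rw [Matrix.transpose_nonsing_inv, hGdef, Matrix.transpose_mul, Matrix.transpose_transpose]
  -- basic identities
  have hzAu : z = A *ᵥ u := by rw [hz, hu]
  have hGuy : G *ᵥ u = y := by
    rw [hu, Matrix.mulVec_mulVec, hGGi, Matrix.one_mulVec]
  have hGiy_u : G⁻¹ *ᵥ y = u := hu.symm
  -- dot product helpers
  have hdotGi : ∀ v w : Fin n → ℝ, v ⬝ᵥ (G⁻¹ *ᵥ w) = (G⁻¹ *ᵥ v) ⬝ᵥ w := by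
    intro v w
    rw [Matrix.dotProduct_mulVec, ← Matrix.mulVec_transpose, hGsymm]
  have hzz : z ⬝ᵥ z = y ⬝ᵥ u := by
    rw [hzAu, Matrix.dotProduct_mulVec, ← Matrix.mulVec_transpose,
      Matrix.mulVec_mulVec, ← hGdef, hGuy]
  have hzr : z ⬝ᵥ r = u ⬝ᵥ (Aᵀ *ᵥ r) := by
    rw [hzAu, ← Matrix.vecMul_transpose, ← Matrix.dotProduct_mulVec]
  -- expand the right-hand side
  have h2B : (2 : ℝ) • ((1 / 2 : ℝ) • (B + Bᵀ)) = B + Bᵀ := by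
    rw [smul_smul]; norm_num
  have hBy : B *ᵥ y = (x ⬝ᵥ u) • (G⁻¹ *ᵥ (Aᵀ *ᵥ r)) := by
    rw [hB, ← Matrix.mulVec_mulVec, hGiy_u, ← Matrix.mulVec_mulVec, vecMulVec_mulVec',
      Matrix.mulVec_smul, ← Matrix.mulVec_mulVec]
  have hyBy : y ⬝ᵥ (B *ᵥ y) = (x ⬝ᵥ u) * (z ⬝ᵥ r) := by
    rw [hBy, dotProduct_smul, smul_eq_mul, hdotGi, hGiy_u, hzr]
  have hyBty : y ⬝ᵥ (Bᵀ *ᵥ y) = (x ⬝ᵥ u) * (z ⬝ᵥ r) := by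
    rw [Matrix.dotProduct_mulVec, ← Matrix.mulVec_transpose, Matrix.transpose_transpose,
      ← hyBy, dotProduct_comm]
  have hGiGiy : (G⁻¹ * G⁻¹) *ᵥ y = G⁻¹ *ᵥ u := by
    rw [← Matrix.mulVec_mulVec, hGiy_u]
  have hRHS : y ⬝ᵥ (Mbar *ᵥ y)
      = (1 + r ⬝ᵥ r) * (u ⬝ᵥ u) + (1 + x ⬝ᵥ x) * (y ⬝ᵥ u)
        - 2 * ((x ⬝ᵥ u) * (z ⬝ᵥ r)) := by
    rw [hM, h2B, Matrix.sub_mulVec, Matrix.add_mulVec, Matrix.add_mulVec,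
      Matrix.smul_mulVec, Matrix.smul_mulVec,
      dotProduct_sub, dotProduct_add, dotProduct_add,
      dotProduct_smul, dotProduct_smul, smul_eq_mul, smul_eq_mul,
      hyBy, hyBty, euclNorm_sq, euclNorm_sq,
      hGiGiy, hdotGi, hGiy_u]
    ring
  rw [hRHS, frob_expand, euclNorm_sq, euclNorm_sq, hzz,
    dotProduct_comm r z, dotProduct_comm u x]
  ring
end

section
/- Let A ∈ ℝ^{m×n} have full column rank n, b ∈ ℝ^m, c ∈ ℝⁿ, x = (AᵀA)⁻¹(Aᵀb + c), r = b − Ax, A† = (AᵀA)⁻¹Aᵀ. Consider the linear map L: ℝ^{m×n} × ℝ^m × ℝⁿ → ℝⁿ given by L(E, f, g) = (AᵀA)⁻¹Eᵀr − A†Ex + A†f + (AᵀA)⁻¹g. Then the operator norm of L with respect to the norm ‖[E, f, g]‖_F = sqrt(‖E‖_F² + ‖f‖² + ‖g‖²) on the domain and the Euclidean norm on ℝⁿ equals sqrt(‖M̄‖), i.e. sup_{(E,f,g)≠0} ‖L(E,f,g)‖ / ‖[E,f,g]‖_F = sqrt(‖M̄‖), where M̄ = (1 + ‖r‖²)(AᵀA)⁻²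 + (1 + ‖x‖²)(AᵀA)⁻¹ − 2 sym(B), B = A† r xᵀ (AᵀA)⁻¹, sym(B) = (B + Bᵀ)/2, and ‖M̄‖ is the spectral (Euclidean operator) norm of M̄. -/
open Matrix

/-- Spectral (Euclidean operator) norm of a matrix, as the supremum of
`‖M y‖ / ‖y‖` over nonzero `y`. -/
noncomputable def specNorm {k l : Type*} [Fintype k] [Fintype l]
    (M : Matrix k l ℝ) : ℝ :=
  sSup {t : ℝ | ∃ y : l → ℝ, y ≠ 0 ∧ t = euclNorm (M *ᵥ y) / euclNorm y}

/-! Write `P = (AᵀA)⁻¹`. Identifying a triple `(E, f, g)` with a vector of the Euclidean space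
indexed by `(Fin m × Fin n) ⊕ Fin m ⊕ Fin n` turns `‖[E, f, g]‖_F` into a Euclidean norm, so the
supremum is the operator norm of a continuous linear map `L` between Euclidean spaces, and the
C⋆-identity gives `‖L‖² = ‖L L*‖`. The adjoint is `L* y = (r (P y)ᵀ - A P y xᵀ, A P y, P y)`, and
expanding `L (L* y)` with `Pᵀ = P` and `P AᵀA = 1` yields exactly `M̄ y`. -/

open WithLp
open scoped InnerProduct

namespace ContinuousLinearMap

theorem sSup_norm_apply_div_norm_eq_opNorm {𝕜 E F : Type*} [NontriviallyNormedField 𝕜]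
    [NormedAddCommGroup E] [NormedSpace 𝕜 E] [NormedAddCommGroup F] [NormedSpace 𝕜 F]
    (f : E →L[𝕜] F) :
    sSup {t : ℝ | ∃ v, v ≠ 0 ∧ t = ‖f v‖ / ‖v‖} = ‖f‖ := by
  have hle : ∀ t ∈ {t : ℝ | ∃ v, v ≠ 0 ∧ t = ‖f v‖ / ‖v‖}, t ≤ ‖f‖ := by
    rintro t ⟨v, -, rfl⟩
    exact f.ratio_le_opNorm v
  refine le_antisymm (Real.sSup_le hle (norm_nonneg f)) ?_
  refine f.opNorm_le_bound (Real.sSup_nonneg ?_) fun v => ?_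
  · rintro t ⟨v, -, rfl⟩
    positivity
  · rcases eq_or_ne v 0 with rfl | hv
    · simp
    · rw [← div_le_iff₀ (norm_pos_iff.mpr hv)]
      exact le_csSup ⟨‖f‖, hle⟩ ⟨v, hv, rfl⟩

theorem norm_self_comp_adjoint {𝕜 E F : Type*} [RCLike 𝕜]
    [NormedAddCommGroup E] [InnerProductSpace 𝕜 E] [CompleteSpace E]
    [NormedAddCommGroup F] [InnerProductSpace 𝕜 F] [CompleteSpace F] (f : E →L[𝕜] F) :
    ‖f ∘L f†‖ = ‖f‖ * ‖f‖ := by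
  simpa [adjoint_adjoint, LinearIsometryEquiv.norm_map] using norm_adjoint_comp_self (f†)

end ContinuousLinearMap

section MatrixNorms

variable {k l : Type*} [Fintype k] [Fintype l]

lemma isUnit_transpose_mul_self_of_rank_eq {R : Type*} [DecidableEq l] [Field R] [LinearOrder R]
    [IsStrictOrderedRing R] (A : Matrix k l R) (hA : A.rank = Fintype.card l) :
    IsUnit (Aᵀ * A) := by
  rw [← mulVec_surjective_iff_isUnit, ← Matrix.coe_mulVecLin, ← LinearMap.range_eq_top]
  apply Submodule.eq_top_of_finrank_eq
  rw [← rank, rank_transpose_mul_self, hA, Module.finrank_fintype_fun_eq_card]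

lemma sum_mul_vecMulVec (E : Matrix k l ℝ) (a : k → ℝ) (b : l → ℝ) :
    ∑ i, ∑ j, E i j * vecMulVec a b i j = a ⬝ᵥ E *ᵥ b := by
  simp only [vecMulVec_apply, dotProduct, mulVec, Finset.mul_sum]
  exact Finset.sum_congr rfl fun i _ => Finset.sum_congr rfl fun j _ => by ring

lemma euclNorm_eq_norm_toLp (v : k → ℝ) : euclNorm v = ‖toLp 2 v‖ := by
  simp [euclNorm, EuclideanSpace.norm_eq]

lemma sq_euclNorm (v : k → ℝ) : euclNorm v ^ 2 = v ⬝ᵥ v := by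
  rw [euclNorm, Real.sq_sqrt (by positivity)]
  simp [dotProduct, sq]

lemma specNorm_eq_norm_toEuclideanCLM [DecidableEq l] (M : Matrix l l ℝ) :
    specNorm M = ‖toEuclideanCLM (𝕜 := ℝ) M‖ := by
  rw [← ContinuousLinearMap.sSup_norm_apply_div_norm_eq_opNorm, specNorm]
  congr 1
  ext t
  constructor
  · rintro ⟨y, hy, rfl⟩
    exact ⟨toLp 2 y, by simpa using hy, by simp [euclNorm_eq_norm_toLp]⟩
  · rintro ⟨v, hv, rfl⟩
    obtain ⟨y, rfl⟩ : ∃ y, v = toLp 2 y := ⟨ofLp v, rfl⟩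
    exact ⟨y, by simpa using hv, by simp [euclNorm_eq_norm_toLp]⟩

end MatrixNorms

section Perturbation

variable {k l : Type*}

def perturbationEquiv :
    (Matrix k l ℝ × (k → ℝ) × (l → ℝ)) ≃ₗ[ℝ] EuclideanSpace ℝ (k × l ⊕ k ⊕ l) where
  toFun p := toLp 2 (Sum.elim (fun q => p.1 q.1 q.2) (Sum.elim p.2.1 p.2.2))
  invFun v :=
    (.of fun i j => v (.inl (i, j)), fun i => v (.inr (.inl i)), fun j => v (.inr (.inr j)))
  map_add' _ _ := by ext (⟨i, j⟩ | i | j) <;> rfl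
  map_smul' _ _ := by ext (⟨i, j⟩ | i | j) <;> rfl
  left_inv _ := rfl
  right_inv _ := by ext (⟨i, j⟩ | i | j) <;> rfl

lemma perturbationEquiv_apply (p : Matrix k l ℝ × (k → ℝ) × (l → ℝ)) :
    perturbationEquiv p = toLp 2 (Sum.elim (fun q => p.1 q.1 q.2) (Sum.elim p.2.1 p.2.2)) :=
  rfl

variable [Fintype k] [Fintype l]

lemma inner_perturbationEquiv (p q : Matrix k l ℝ × (k → ℝ) × (l → ℝ)) :
    inner ℝ (perturbationEquiv p) (perturbationEquiv q)
      = ∑ i, ∑ j, p.1 i j * q.1 i j + p.2.1 ⬝ᵥ q.2.1 + p.2.2 ⬝ᵥ q.2.2 := by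
  simp [perturbationEquiv_apply, EuclideanSpace.inner_toLp_toLp, dotProduct, Fintype.sum_sum_type,
    Fintype.sum_prod_type, mul_comm, add_assoc]

lemma norm_perturbationEquiv (E : Matrix k l ℝ) (f : k → ℝ) (g : l → ℝ) :
    ‖perturbationEquiv (E, f, g)‖ = √(frobNorm E ^ 2 + euclNorm f ^ 2 + euclNorm g ^ 2) := by
  rw [norm_eq_sqrt_real_inner, inner_perturbationEquiv, frobNorm, euclNorm, euclNorm,
    Real.sq_sqrt (by positivity), Real.sq_sqrt (by positivity), Real.sq_sqrt (by positivity)]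
  simp [dotProduct, sq]

end Perturbation

section SolutionDeriv

variable {k l : Type*} [Fintype k] [Fintype l]
  (A : Matrix k l ℝ) (P : Matrix l l ℝ) (r : k → ℝ) (x : l → ℝ)

def solutionDeriv : (Matrix k l ℝ × (k → ℝ) × (l → ℝ)) →ₗ[ℝ] (l → ℝ) where
  toFun p := P *ᵥ (p.1ᵀ *ᵥ r) - (P * Aᵀ) *ᵥ (p.1 *ᵥ x) + (P * Aᵀ) *ᵥ p.2.1 + P *ᵥ p.2.2
  map_add' p q := by
    simp only [Prod.fst_add, Prod.snd_add, transpose_add, add_mulVec, mulVec_add]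
    abel
  map_smul' c p := by
    simp only [Prod.smul_fst, Prod.smul_snd, transpose_smul, smul_mulVec, mulVec_smul,
      RingHom.id_apply]
    module

noncomputable def solutionDerivCLM : EuclideanSpace ℝ (k × l ⊕ k ⊕ l) →L[ℝ] EuclideanSpace ℝ l :=
  LinearMap.toContinuousLinearMap <| (WithLp.linearEquiv 2 ℝ (l → ℝ)).symm.toLinearMap
    ∘ₗ solutionDeriv A P r x ∘ₗ perturbationEquiv.symm.toLinearMap

lemma solutionDerivCLM_perturbationEquiv (p : Matrix k l ℝ × (k → ℝ) × (l → ℝ)) :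
    solutionDerivCLM A P r x (perturbationEquiv p) = toLp 2 (solutionDeriv A P r x p) := by
  simp [solutionDerivCLM]

lemma sSup_solutionDeriv_ratio :
    sSup {t : ℝ | ∃ (E : Matrix k l ℝ) (f : k → ℝ) (g : l → ℝ), ¬(E = 0 ∧ f = 0 ∧ g = 0) ∧
        t = euclNorm (solutionDeriv A P r x (E, f, g))
          / √(frobNorm E ^ 2 + euclNorm f ^ 2 + euclNorm g ^ 2)}
      = ‖solutionDerivCLM A P r x‖ := by
  have hratio (E : Matrix k l ℝ) (f : k → ℝ) (g : l → ℝ) :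
      ‖solutionDerivCLM A P r x (perturbationEquiv (E, f, g))‖ / ‖perturbationEquiv (E, f, g)‖
        = euclNorm (solutionDeriv A P r x (E, f, g))
          / √(frobNorm E ^ 2 + euclNorm f ^ 2 + euclNorm g ^ 2) := by
    rw [solutionDerivCLM_perturbationEquiv, norm_perturbationEquiv,
      euclNorm_eq_norm_toLp (solutionDeriv A P r x (E, f, g))]
  rw [← ContinuousLinearMap.sSup_norm_apply_div_norm_eq_opNorm]
  congr 1
  ext t
  constructor
  · rintro ⟨E, f, g, hne, rfl⟩
    exact ⟨perturbationEquiv (E, f, g), by simpa [Prod.ext_iff] using hne, (hratio E f g).symm⟩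
  · rintro ⟨v, hv, rfl⟩
    obtain ⟨⟨E, f, g⟩, rfl⟩ := perturbationEquiv.surjective v
    exact ⟨E, f, g, by simpa [Prod.ext_iff] using hv, hratio E f g⟩

def conditionMatrix : Matrix l l ℝ :=
  (1 + r ⬝ᵥ r) • (P * P) + (1 + x ⬝ᵥ x) • P
    - (P * Aᵀ * vecMulVec r x * P + (P * Aᵀ * vecMulVec r x * P)ᵀ)

def solutionDerivAdjoint (y : l → ℝ) : Matrix k l ℝ × (k → ℝ) × (l → ℝ) :=
  (vecMulVec r (P *ᵥ y) - vecMulVec (A *ᵥ P *ᵥ y) x, A *ᵥ P *ᵥ y, P *ᵥ y)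

variable {P}

lemma inner_solutionDeriv (hP : Pᵀ = P) (p : Matrix k l ℝ × (k → ℝ) × (l → ℝ)) (y : l → ℝ) :
    inner ℝ (toLp 2 (solutionDeriv A P r x p)) (toLp 2 y)
      = inner ℝ (perturbationEquiv p) (perturbationEquiv (solutionDerivAdjoint A P r x y)) := by
  obtain ⟨E, f, g⟩ := p
  have hPAt : (P * Aᵀ)ᵀ = A * P := by rw [transpose_mul, transpose_transpose, hP]
  rw [EuclideanSpace.inner_toLp_toLp, star_trivial, inner_perturbationEquiv, solutionDerivAdjoint]
  simp only [solutionDeriv, LinearMap.coe_mk, AddHom.coe_mk, dotProduct_add, dotProduct_sub,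
    Matrix.sub_apply, mul_sub, Finset.sum_sub_distrib, sum_mul_vecMulVec]
  rw [← dotProduct_transpose_mulVec P _ y, ← dotProduct_transpose_mulVec (P * Aᵀ) _ y,
    ← dotProduct_transpose_mulVec (P * Aᵀ) _ y, ← dotProduct_transpose_mulVec P g y, hP, hPAt,
    ← mulVec_mulVec, dotProduct_comm (Eᵀ *ᵥ r), dotProduct_transpose_mulVec,
    dotProduct_comm (E *ᵥ x)]

lemma adjoint_solutionDerivCLM_toLp (hP : Pᵀ = P) (y : l → ℝ) :
    ((solutionDerivCLM A P r x)†) (toLp 2 y)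
      = perturbationEquiv (solutionDerivAdjoint A P r x y) := by
  refine ext_inner_left ℝ fun v => ?_
  obtain ⟨p, rfl⟩ := perturbationEquiv.surjective v
  rw [ContinuousLinearMap.adjoint_inner_right, solutionDerivCLM_perturbationEquiv,
    inner_solutionDeriv A r x hP]

lemma solutionDeriv_solutionDerivAdjoint [DecidableEq l] (hP : Pᵀ = P) (hPA : P * (Aᵀ * A) = 1)
    (y : l → ℝ) :
    solutionDeriv A P r x (solutionDerivAdjoint A P r x y) = conditionMatrix A P r x *ᵥ y := by
  rw [solutionDerivAdjoint, conditionMatrix]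
  set u := P *ᵥ y with hu
  set w := A *ᵥ u with hw
  have hEr : (vecMulVec r u - vecMulVec w x)ᵀ *ᵥ r = (r ⬝ᵥ r) • u - (r ⬝ᵥ w) • x := by
    simp only [transpose_sub, transpose_vecMulVec, sub_mulVec, vecMulVec_mulVec, op_smul_eq_smul,
      dotProduct_comm w]
  have hEx : (vecMulVec r u - vecMulVec w x) *ᵥ x = (x ⬝ᵥ u) • r - (x ⬝ᵥ x) • w := by
    simp only [sub_mulVec, vecMulVec_mulVec, op_smul_eq_smul, dotProduct_comm u]
  have hPAw : (P * Aᵀ) *ᵥ w = u := by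
    rw [hw, mulVec_mulVec, Matrix.mul_assoc, hPA, one_mulVec]
  have hBy : (P * Aᵀ * vecMulVec r x * P) *ᵥ y = (x ⬝ᵥ u) • ((P * Aᵀ) *ᵥ r) := by
    rw [← mulVec_mulVec, ← mulVec_mulVec, vecMulVec_mulVec, op_smul_eq_smul, mulVec_smul]
  have hBty : (P * Aᵀ * vecMulVec r x * P)ᵀ *ᵥ y = (r ⬝ᵥ w) • (P *ᵥ x) := by
    simp only [transpose_mul, transpose_vecMulVec, transpose_transpose, hP, ← mulVec_mulVec,
      vecMulVec_mulVec, op_smul_eq_smul, mulVec_smul, ← hu, ← hw]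
  have hPPy : (P * P) *ᵥ y = P *ᵥ u := (mulVec_mulVec _ _ _).symm
  simp only [solutionDeriv, LinearMap.coe_mk, AddHom.coe_mk, hEr, hEx, hPAw, mulVec_sub,
    mulVec_smul, sub_mulVec, add_mulVec, smul_mulVec, hBy, hBty, hPPy]
  module

lemma solutionDerivCLM_comp_adjoint [DecidableEq l] (hP : Pᵀ = P) (hPA : P * (Aᵀ * A) = 1) :
    solutionDerivCLM A P r x ∘L (solutionDerivCLM A P r x)†
      = toEuclideanCLM (𝕜 := ℝ) (conditionMatrix A P r x) := by
  ext1 v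
  obtain ⟨y, rfl⟩ : ∃ y, v = toLp 2 y := ⟨ofLp v, rfl⟩
  rw [ContinuousLinearMap.comp_apply, adjoint_solutionDerivCLM_toLp A r x hP,
    solutionDerivCLM_perturbationEquiv, solutionDeriv_solutionDerivAdjoint A r x hP hPA,
    toEuclideanCLM_toLp]

end SolutionDeriv

theorem stmt6_general {m n : ℕ}
    (A : Matrix (Fin m) (Fin n) ℝ) (hA : A.rank = n)
    (x : Fin n → ℝ)
    (r : Fin m → ℝ)
    (B : Matrix (Fin n) (Fin n) ℝ)
    (hB : B = ((Aᵀ * A)⁻¹ * Aᵀ) * vecMulVec r x * (Aᵀ * A)⁻¹)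
    (Mbar : Matrix (Fin n) (Fin n) ℝ)
    (hM : Mbar = (1 + euclNorm r ^ 2) • ((Aᵀ * A)⁻¹ * (Aᵀ * A)⁻¹)
        + (1 + euclNorm x ^ 2) • (Aᵀ * A)⁻¹
        - (2 : ℝ) • ((1 / 2 : ℝ) • (B + Bᵀ))) :
    sSup {t : ℝ | ∃ (E : Matrix (Fin m) (Fin n) ℝ) (f : Fin m → ℝ) (g : Fin n → ℝ),
        ¬(E = 0 ∧ f = 0 ∧ g = 0) ∧
        t = euclNorm ((Aᵀ * A)⁻¹ *ᵥ (Eᵀ *ᵥ r) - ((Aᵀ * A)⁻¹ * Aᵀ) *ᵥ (E *ᵥ x)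
              + ((Aᵀ * A)⁻¹ * Aᵀ) *ᵥ f + (Aᵀ * A)⁻¹ *ᵥ g)
            / Real.sqrt (frobNorm E ^ 2 + euclNorm f ^ 2 + euclNorm g ^ 2)} =
      Real.sqrt (specNorm Mbar) := by
  have hdet : IsUnit (Aᵀ * A).det := (isUnit_iff_isUnit_det _).mp <|
    isUnit_transpose_mul_self_of_rank_eq A (by rwa [Fintype.card_fin])
  have hPA : (Aᵀ * A)⁻¹ * (Aᵀ * A) = 1 := nonsing_inv_mul _ hdet
  have hP : (Aᵀ * A)⁻¹ᵀ = (Aᵀ * A)⁻¹ := by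
    rw [transpose_nonsing_inv, transpose_mul, transpose_transpose]
  have hMbar : Mbar = conditionMatrix A (Aᵀ * A)⁻¹ r x := by
    rw [hM, hB, conditionMatrix, sq_euclNorm, sq_euclNorm, smul_smul]
    norm_num
  calc _ = ‖solutionDerivCLM A (Aᵀ * A)⁻¹ r x‖ := sSup_solutionDeriv_ratio A _ r x
    _ = √(specNorm Mbar) := by
      rw [hMbar, specNorm_eq_norm_toEuclideanCLM, ← solutionDerivCLM_comp_adjoint A r x hP hPA,
        ContinuousLinearMap.norm_self_comp_adjoint, Real.sqrt_mul_self (norm_nonneg _)]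

/-- Theorem 3.3: structured absolute condition number of `AᵀAx = Aᵀb + c`.
The operator norm of `L(E,f,g) = (AᵀA)⁻¹Eᵀr − A†Ex + A†f + (AᵀA)⁻¹g`, with
`‖[E,f,g]‖_F = sqrt(‖E‖_F² + ‖f‖² + ‖g‖²)` on the domain and the Euclidean norm on the range,
equals `sqrt(‖M̄‖)`, where `M̄ = (1 + ‖r‖²)(AᵀA)⁻² + (1 + ‖x‖²)(AᵀA)⁻¹ − 2 sym(B)` and
`B = A† r xᵀ (AᵀA)⁻¹`. -/
theorem stmt6 {m n : ℕ} (hn : 0 < n) (hmn : n ≤ m)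
    (A : Matrix (Fin m) (Fin n) ℝ) (hA : A.rank = n)
    (b : Fin m → ℝ) (c : Fin n → ℝ)
    (x : Fin n → ℝ) (hx : x = (Aᵀ * A)⁻¹ *ᵥ (Aᵀ *ᵥ b + c))
    (r : Fin m → ℝ) (hr : r = b - A *ᵥ x)
    (B : Matrix (Fin n) (Fin n) ℝ)
    (hB : B = ((Aᵀ * A)⁻¹ * Aᵀ) * vecMulVec r x * (Aᵀ * A)⁻¹)
    (Mbar : Matrix (Fin n) (Fin n) ℝ)
    (hM : Mbar = (1 + euclNorm r ^ 2) • ((Aᵀ * A)⁻¹ * (Aᵀ * A)⁻¹)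
        + (1 + euclNorm x ^ 2) • (Aᵀ * A)⁻¹
        - (2 : ℝ) • ((1 / 2 : ℝ) • (B + Bᵀ))) :
    sSup {t : ℝ | ∃ (E : Matrix (Fin m) (Fin n) ℝ) (f : Fin m → ℝ) (g : Fin n → ℝ),
        ¬(E = 0 ∧ f = 0 ∧ g = 0) ∧
        t = euclNorm ((Aᵀ * A)⁻¹ *ᵥ (Eᵀ *ᵥ r) - ((Aᵀ * A)⁻¹ * Aᵀ) *ᵥ (E *ᵥ x)
              + ((Aᵀ * A)⁻¹ * Aᵀ) *ᵥ f + (Aᵀ * A)⁻¹ *ᵥ g)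
            / Real.sqrt (frobNorm E ^ 2 + euclNorm f ^ 2 + euclNorm g ^ 2)} =
      Real.sqrt (specNorm Mbar) :=
  stmt6_general A hA x r B hB Mbar hM
end
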